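/- For H ∈ (1/2, 1) and 0 < s < t, the difference R^X(t,t) − 2R^X(t,s) + R^X(s,s), where R^X(t,s) = H∫₀^{s∧t}((s∧t)−a)^{2H−1}(((s∨t)+a)^{−1/2}+((s∨t)−a)^{−1/2})da, satisfies R^X(t,t) − 2R^X(t,s) + R^X(s,s) ≤ C·(t−s)^{1/2} for a constant C depending only on H and an upper bound T on t. -/

import Mathlib

open MeasureTheory

noncomputable def RX (H t s : ℝ) : ℝ :=
  H * ∫ a in (0:ℝ)..(min s t),
    (min s t - a) ^ (2*H - 1) * ((max s t + a) ^ (-(1:ℝ)/2) + (max s t - a) ^ (-(1:ℝ)/2))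

/-!
For `s ≤ t`, `RX H t s = H ∫₀ˢ (s - a)^p K_t(a) da` with `p = 2H - 1 ∈ (0, 1)` and
`K_M(a) = (M + a)^{-1/2} + (M - a)^{-1/2}`, so the second difference splits into three
integrals. On `[s, t]` the integrand is at most `2 (t - s)^p (t - a)^{-1/2}`. On `[0, s]`,
concavity of `x ↦ x^p` gives `(t - a)^p - (s - a)^p ≤ p (t - s) (s - a)^{p-1}` while
`K_t ≤ 2 (t - s)^{-1/2}`, and subadditivity of `x ↦ x^{1/2}` gives
`K_s - K_t ≤ 2 (t - s)^{1/2} / (s - a)`. Each time a factor `(t - s)^{1/2}` comes out,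
multiplied by an integrable singularity `(s - a)^{p-1}` or `(t - a)^{-1/2}`.
-/

open intervalIntegral Set Real

lemma integral_sub_rpow {q : ℝ} (hq : -1 < q) (u x : ℝ) :
    ∫ a in u..x, (x - a) ^ q = (x - u) ^ (q + 1) / (q + 1) := by
  rw [integral_comp_sub_left (· ^ q) x, integral_rpow (Or.inl hq), sub_self,
    zero_rpow (by linarith), sub_zero]

lemma intervalIntegrable_sub_rpow {q : ℝ} (hq : -1 < q) (u x : ℝ) :
    IntervalIntegrable (fun a => (x - a) ^ q) volume u x := by
  simpa using (intervalIntegrable_rpow' (a := x - u) (b := x - x) hq).comp_sub_left x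

lemma rpow_sub_rpow_le_mul_mul_rpow_sub_one {x y p : ℝ} (hx : 0 ≤ x) (hy : 0 < y)
    (hp0 : 0 ≤ p) (hp1 : p ≤ 1) : x ^ p - y ^ p ≤ p * (x - y) * y ^ (p - 1) := by
  have hbern : (x / y) ^ p ≤ 1 + p * (x / y - 1) := by
    simpa using rpow_one_add_le_one_add_mul_self (s := x / y - 1)
      (by linarith [div_nonneg hx hy.le]) hp0 hp1
  rw [div_rpow hx hy.le, div_le_iff₀ (rpow_pos_of_pos hy p)] at hbern
  rw [rpow_sub_one hy.ne']
  calc x ^ p - y ^ p ≤ (1 + p * (x / y - 1)) * y ^ p - y ^ p := by linarith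
    _ = p * (x - y) * (y ^ p / y) := by field_simp; ring

lemma rpow_neg_sub_rpow_neg_le {x y q : ℝ} (hy : 0 < y) (hyx : y ≤ x) (hq0 : 0 ≤ q)
    (hq1 : q ≤ 1) : y ^ (-q) - x ^ (-q) ≤ (x - y) ^ q / y ^ (2 * q) := by
  have hx : 0 < x := hy.trans_le hyx
  have hsub : x ^ q - y ^ q ≤ (x - y) ^ q := by
    have := rpow_add_le_add_rpow hy.le (sub_nonneg.2 hyx) hq0 hq1
    rw [add_sub_cancel] at this
    linarith
  have hden : y ^ (2 * q) ≤ x ^ q * y ^ q := by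
    rw [two_mul, rpow_add hy]
    gcongr
  calc y ^ (-q) - x ^ (-q) = (x ^ q - y ^ q) / (x ^ q * y ^ q) := by
        rw [rpow_neg hy.le, rpow_neg hx.le]
        field_simp
    _ ≤ (x - y) ^ q / (x ^ q * y ^ q) := by gcongr
    _ ≤ (x - y) ^ q / y ^ (2 * q) := by gcongr

noncomputable def rxKernel (M a : ℝ) : ℝ := (M + a) ^ (-(1:ℝ)/2) + (M - a) ^ (-(1:ℝ)/2)

noncomputable def rxIntegral (p m M : ℝ) : ℝ := ∫ a in (0:ℝ)..m, (m - a) ^ p * rxKernel M a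

lemma RX_eq_rxIntegral (H : ℝ) {s t : ℝ} (hst : s ≤ t) :
    RX H t s = H * rxIntegral (2 * H - 1) s t := by
  simp only [RX, rxIntegral, rxKernel, min_eq_left hst, max_eq_right hst]

lemma intervalIntegrable_rpow_mul_rxKernel {p m M : ℝ} (hp : 0 ≤ p) (hm : 0 < m)
    (hmM : m ≤ M) :
    IntervalIntegrable (fun a => (m - a) ^ p * rxKernel M a) volume 0 m := by
  have hpow : ContinuousOn (fun a : ℝ => (m - a) ^ p) (uIcc 0 m) :=
    (continuous_const.sub continuous_id).continuousOn.rpow_const fun _ _ => Or.inr hp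
  have hplus : IntervalIntegrable (fun a => (M + a) ^ (-(1:ℝ)/2)) volume 0 m := by
    refine ContinuousOn.intervalIntegrable
      ((continuous_const.add continuous_id).continuousOn.rpow_const fun a ha => Or.inl ?_)
    rw [uIcc_of_le hm.le] at ha
    exact (show 0 < M + a by linarith [ha.1]).ne'
  have hminus : IntervalIntegrable (fun a => (M - a) ^ (-(1:ℝ)/2)) volume 0 m := by
    rcases hmM.eq_or_lt with rfl | hmM
    · exact intervalIntegrable_sub_rpow (by norm_num) 0 m
    · refine ContinuousOn.intervalIntegrable
        ((continuous_const.sub continuous_id).continuousOn.rpow_const fun a ha => Or.inl ?_)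
      rw [uIcc_of_le hm.le] at ha
      exact (show 0 < M - a by linarith [ha.2]).ne'
  simpa only [rxKernel, mul_add] using
    (hplus.continuousOn_mul hpow).add (hminus.continuousOn_mul hpow)

lemma rxKernel_nonneg {M a : ℝ} (ha : 0 ≤ a) (haM : a ≤ M) : 0 ≤ rxKernel M a :=
  add_nonneg (rpow_nonneg (by linarith) _) (rpow_nonneg (by linarith) _)

lemma rxKernel_le {M a : ℝ} (ha : 0 ≤ a) (haM : a < M) :
    rxKernel M a ≤ 2 * (M - a) ^ (-(1:ℝ)/2) := by
  have : (M + a) ^ (-(1:ℝ)/2) ≤ (M - a) ^ (-(1:ℝ)/2) :=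
    rpow_le_rpow_of_nonpos (by linarith) (by linarith) (by norm_num)
  rw [rxKernel]
  linarith

lemma rxKernel_sub_rxKernel_le {s t a : ℝ} (ha : 0 ≤ a) (has : a < s) (hst : s ≤ t) :
    rxKernel s a - rxKernel t a ≤ 2 * (t - s) ^ ((1:ℝ)/2) / (s - a) := by
  have key : ∀ y x : ℝ, 0 < y → y ≤ x →
      y ^ (-(1:ℝ)/2) - x ^ (-(1:ℝ)/2) ≤ (x - y) ^ ((1:ℝ)/2) / y := fun y x hy hyx => by
    simpa [neg_div] using rpow_neg_sub_rpow_neg_le hy hyx (q := 1/2) (by norm_num) (by norm_num)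
  have hplus := key (s + a) (t + a) (by linarith) (by linarith)
  have hminus := key (s - a) (t - a) (by linarith) (by linarith)
  rw [show t + a - (s + a) = t - s by ring] at hplus
  rw [show t - a - (s - a) = t - s by ring] at hminus
  have hmono : (t - s) ^ ((1:ℝ)/2) / (s + a) ≤ (t - s) ^ ((1:ℝ)/2) / (s - a) :=
    div_le_div_of_nonneg_left (by positivity) (by linarith) (by linarith)
  rw [rxKernel, rxKernel, mul_div_assoc]
  linarith

section
variable {p s t : ℝ}

lemma integral_tail_le (hp : 0 ≤ p) (hs : 0 ≤ s) (hst : s < t) :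
    ∫ a in s..t, (t - a) ^ p * rxKernel t a ≤ 4 * (t - s) ^ p * (t - s) ^ ((1:ℝ)/2) := by
  have hint : IntervalIntegrable (fun a => (t - a) ^ p * rxKernel t a) volume s t :=
    (intervalIntegrable_rpow_mul_rxKernel hp (hs.trans_lt hst) le_rfl).mono_set
      (uIcc_subset_uIcc_right (mem_uIcc_of_le hs hst.le))
  calc ∫ a in s..t, (t - a) ^ p * rxKernel t a
      ≤ ∫ a in s..t, 2 * (t - s) ^ p * (t - a) ^ (-(1:ℝ)/2) := by
        refine integral_mono_on_of_le_Ioo hst.le hint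
          ((intervalIntegrable_sub_rpow (by norm_num) s t).const_mul _) fun a ⟨hsa, hat⟩ => ?_
        have hK := rxKernel_le (hs.trans hsa.le) hat
        have hpow : (t - a) ^ p ≤ (t - s) ^ p := by gcongr
        calc (t - a) ^ p * rxKernel t a ≤ (t - s) ^ p * (2 * (t - a) ^ (-(1:ℝ)/2)) := by
              gcongr
              exact rxKernel_nonneg (hs.trans hsa.le) hat.le
          _ = 2 * (t - s) ^ p * (t - a) ^ (-(1:ℝ)/2) := by ring
    _ = 4 * (t - s) ^ p * (t - s) ^ ((1:ℝ)/2) := by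
        rw [intervalIntegral.integral_const_mul, integral_sub_rpow (by norm_num)]
        norm_num
        ring

lemma integral_rpow_sub_mul_rxKernel_le (hp0 : 0 < p) (hp1 : p ≤ 1) (hs : 0 < s) (hst : s < t) :
    ∫ a in (0:ℝ)..s, ((t - a) ^ p - (s - a) ^ p) * rxKernel t a
      ≤ 2 * s ^ p * (t - s) ^ ((1:ℝ)/2) := by
  have hint : IntervalIntegrable (fun a => ((t - a) ^ p - (s - a) ^ p) * rxKernel t a)
      volume 0 s := by
    simpa only [sub_mul] using
      ((intervalIntegrable_rpow_mul_rxKernel hp0.le (hs.trans hst) le_rfl).mono_set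
        (uIcc_subset_uIcc_left (mem_uIcc_of_le hs.le hst.le))).sub
      (intervalIntegrable_rpow_mul_rxKernel hp0.le hs hst.le)
  calc ∫ a in (0:ℝ)..s, ((t - a) ^ p - (s - a) ^ p) * rxKernel t a
      ≤ ∫ a in (0:ℝ)..s, 2 * p * (t - s) ^ ((1:ℝ)/2) * (s - a) ^ (p - 1) := by
        refine integral_mono_on_of_le_Ioo hs.le hint
          ((intervalIntegrable_sub_rpow (by linarith) 0 s).const_mul _) fun a ⟨ha0, has⟩ => ?_
        have hdiff : (t - a) ^ p - (s - a) ^ p ≤ p * (t - s) * (s - a) ^ (p - 1) := by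
          simpa using rpow_sub_rpow_le_mul_mul_rpow_sub_one (x := t - a) (y := s - a)
            (by linarith) (by linarith) hp0.le hp1
        have hK : rxKernel t a ≤ 2 * (t - s) ^ (-(1:ℝ)/2) := by
          refine (rxKernel_le ha0.le (has.trans hst)).trans
            (mul_le_mul_of_nonneg_left ?_ zero_le_two)
          exact rpow_le_rpow_of_nonpos (sub_pos.2 hst) (by linarith) (by norm_num)
        have hhalf : (t - s) * (t - s) ^ (-(1:ℝ)/2) = (t - s) ^ ((1:ℝ)/2) := by
          rw [show (1:ℝ)/2 = 1 + -(1:ℝ)/2 by norm_num, rpow_add (sub_pos.2 hst), rpow_one]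
        calc ((t - a) ^ p - (s - a) ^ p) * rxKernel t a
            ≤ p * (t - s) * (s - a) ^ (p - 1) * (2 * (t - s) ^ (-(1:ℝ)/2)) :=
              mul_le_mul hdiff hK (rxKernel_nonneg ha0.le (has.trans hst).le)
                (mul_nonneg (mul_nonneg hp0.le (sub_pos.2 hst).le) (rpow_nonneg (by linarith) _))
          _ = 2 * p * (t - s) ^ ((1:ℝ)/2) * (s - a) ^ (p - 1) := by rw [← hhalf]; ring
    _ = 2 * s ^ p * (t - s) ^ ((1:ℝ)/2) := by
        rw [intervalIntegral.integral_const_mul, integral_sub_rpow (by linarith), sub_zero,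
          sub_add_cancel]
        field_simp

lemma rxIntegral_sub_rxIntegral_le_of_kernel (hp : 0 < p) (hs : 0 < s) (hst : s ≤ t) :
    rxIntegral p s s - rxIntegral p s t ≤ 2 / p * s ^ p * (t - s) ^ ((1:ℝ)/2) := by
  rw [rxIntegral, rxIntegral,
    ← integral_sub (intervalIntegrable_rpow_mul_rxKernel hp.le hs le_rfl)
      (intervalIntegrable_rpow_mul_rxKernel hp.le hs hst)]
  calc ∫ a in (0:ℝ)..s, ((s - a) ^ p * rxKernel s a - (s - a) ^ p * rxKernel t a)
      ≤ ∫ a in (0:ℝ)..s, 2 * (t - s) ^ ((1:ℝ)/2) * (s - a) ^ (p - 1) := by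
        refine integral_mono_on_of_le_Ioo hs.le
          ((intervalIntegrable_rpow_mul_rxKernel hp.le hs le_rfl).sub
            (intervalIntegrable_rpow_mul_rxKernel hp.le hs hst))
          ((intervalIntegrable_sub_rpow (by linarith) 0 s).const_mul _) fun a ⟨ha0, has⟩ => ?_
        have hsa : 0 < s - a := sub_pos.2 has
        calc (s - a) ^ p * rxKernel s a - (s - a) ^ p * rxKernel t a
            = (s - a) ^ p * (rxKernel s a - rxKernel t a) := by ring
          _ ≤ (s - a) ^ p * (2 * (t - s) ^ ((1:ℝ)/2) / (s - a)) := by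
            gcongr
            exact rxKernel_sub_rxKernel_le ha0.le has hst
          _ = 2 * (t - s) ^ ((1:ℝ)/2) * (s - a) ^ (p - 1) := by
            rw [rpow_sub_one hsa.ne']
            ring
    _ = 2 / p * s ^ p * (t - s) ^ ((1:ℝ)/2) := by
        rw [intervalIntegral.integral_const_mul, integral_sub_rpow (by linarith), sub_zero,
          sub_add_cancel]
        ring

lemma rxIntegral_sub_rxIntegral_le_of_range (hp0 : 0 < p) (hp1 : p ≤ 1) (hs : 0 < s)
    (hst : s < t) :
    rxIntegral p t t - rxIntegral p s t
      ≤ (4 * (t - s) ^ p + 2 * s ^ p) * (t - s) ^ ((1:ℝ)/2) := by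
  have hint := intervalIntegrable_rpow_mul_rxKernel hp0.le (hs.trans hst) le_rfl
  have hs_mem : s ∈ uIcc 0 t := mem_uIcc_of_le hs.le hst.le
  have hsplit : rxIntegral p t t - rxIntegral p s t
      = (∫ a in s..t, (t - a) ^ p * rxKernel t a)
        + ∫ a in (0:ℝ)..s, ((t - a) ^ p - (s - a) ^ p) * rxKernel t a := by
    simp only [sub_mul]
    rw [integral_sub (hint.mono_set (uIcc_subset_uIcc_left hs_mem))
        (intervalIntegrable_rpow_mul_rxKernel hp0.le hs hst.le), rxIntegral, rxIntegral,
      ← integral_add_adjacent_intervals (hint.mono_set (uIcc_subset_uIcc_left hs_mem))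
        (hint.mono_set (uIcc_subset_uIcc_right hs_mem))]
    ring
  rw [hsplit]
  linarith [integral_tail_le hp0.le hs.le hst, integral_rpow_sub_mul_rxKernel_le hp0 hp1 hs hst]
end

theorem stmt14 (H T : ℝ) (hH1 : 1/2 < H) (hH2 : H < 1) (hT : 0 < T) :
    ∃ C > (0:ℝ), ∀ s t : ℝ, 0 < s → s < t → t ≤ T →
      RX H t t - 2 * RX H t s + RX H s s ≤ C * (t - s) ^ ((1:ℝ)/2) := by
  set p := 2 * H - 1
  have hp0 : 0 < p := by linarith
  refine ⟨H * T ^ p * (6 + 2 / p), by positivity, fun s t hs hst htT => ?_⟩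
  have hsT : s ^ p ≤ T ^ p := by gcongr; linarith
  have htsT : (t - s) ^ p ≤ T ^ p := by gcongr; linarith
  have hrange := rxIntegral_sub_rxIntegral_le_of_range hp0 (by linarith) hs hst
  have hkernel := rxIntegral_sub_rxIntegral_le_of_kernel hp0 hs hst.le
  rw [RX_eq_rxIntegral H le_rfl, RX_eq_rxIntegral H hst.le, RX_eq_rxIntegral H le_rfl]
  calc H * rxIntegral p t t - 2 * (H * rxIntegral p s t) + H * rxIntegral p s s
      = H * ((rxIntegral p t t - rxIntegral p s t) + (rxIntegral p s s - rxIntegral p s t)) := by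
        ring
    _ ≤ H * ((4 * (t - s) ^ p + 2 * s ^ p) * (t - s) ^ ((1:ℝ)/2)
        + 2 / p * s ^ p * (t - s) ^ ((1:ℝ)/2)) := by gcongr
    _ ≤ H * ((4 * T ^ p + 2 * T ^ p) * (t - s) ^ ((1:ℝ)/2)
        + 2 / p * T ^ p * (t - s) ^ ((1:ℝ)/2)) := by gcongr
    _ = H * T ^ p * (6 + 2 / p) * (t - s) ^ ((1:ℝ)/2) := by ring
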